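/- Let n ≥ 3 be odd, let K be a division ring with at least 3 elements, let P be an n-dimensional affine space over K, and set m = (n+1)/2 and r = 2^{m+1} − 4. If a₁, a₂ are lines of P with a₁ and a₂ independent (i.e. the affine span of a₁ ∪ a₂ has dimension 3, so a₁ and a₂ are skew), then there exist lines a₃, …, a_m such that a₁, …, a_m are independent and every line g of P satisfies M_r(a₁,…,a_m; g). -/

import Mathlib

/-- `a` is an affine line: a nonempty affine subspace whose direction has finrank 1. -/
def ALine (K : Type*) {V P : Type*} [DivisionRing K] [AddCommGroup V] [Module K V]
    [AddTorsor V P] (a : AffineSubspace K P) : Prop :=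
  (a : Set P).Nonempty ∧ Module.finrank K a.direction = 1

/-- `a` is an affine plane: a nonempty affine subspace whose direction has finrank 2. -/
def APlane (K : Type*) {V P : Type*} [DivisionRing K] [AddCommGroup V] [Module K V]
    [AddTorsor V P] (a : AffineSubspace K P) : Prop :=
  (a : Set P).Nonempty ∧ Module.finrank K a.direction = 2

/-- Two lines intersect: they are different and have a common point. -/
def AMeets {K V P : Type*} [DivisionRing K] [AddCommGroup V] [Module K V]
    [AddTorsor V P] (a b : AffineSubspace K P) : Prop :=
  a ≠ b ∧ ((a : Set P) ∩ (b : Set P)).Nonempty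

/-- `x` meets the lines `y` and `z` in two distinct points. -/
def AMeetsTwo {K V P : Type*} [DivisionRing K] [AddCommGroup V] [Module K V]
    [AddTorsor V P] (x y z : AffineSubspace K P) : Prop :=
  AMeets x y ∧ AMeets x z ∧ x ⊓ y ≠ x ⊓ z

/-- `M(ℓ₁,…,ℓ_k; x)`: `x` is one of the lines in the list `ls`, or `x` meets two of
them in two distinct points. -/
def MPred {K V P : Type*} [DivisionRing K] [AddCommGroup V] [Module K V]
    [AddTorsor V P] (ls : List (AffineSubspace K P)) (x : AffineSubspace K P) : Prop :=
  x ∈ ls ∨ ∃ y ∈ ls, ∃ z ∈ ls, AMeetsTwo x y z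

/-- `M_q(a₁,…,a_m; x)`: there are lines `b₁,…,b_q` such that
`M(a₁,…,a_m,b₁,…,b_{i-1}; bᵢ)` for all `i`, and `M(a₁,…,a_m,b₁,…,b_q; x)`. -/
def MqPred {K V P : Type*} [DivisionRing K] [AddCommGroup V] [Module K V]
    [AddTorsor V P] (q : ℕ) (as : List (AffineSubspace K P))
    (x : AffineSubspace K P) : Prop :=
  ∃ b : Fin q → AffineSubspace K P, (∀ i, ALine K (b i)) ∧
    (∀ i : Fin q, MPred (as ++ (List.ofFn b).take i) (b i)) ∧
    MPred (as ++ List.ofFn b) x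

/-!
Let `U` be an affine subspace, `a` a line with `dim (U ⊔ a) = dim U + 2`, and `f` an affine
function vanishing on `U` and equal to `1` on `a`. A point `p` of `U ⊔ a` with `f p ∉ {0, 1}`
lies on a transversal from a point of `U` to a point of `a`; so if every point of `U` lies on a
line inside `U` obtained in `c` steps, such a point lies on a line obtained in `c + 1` steps.
A point with `f p = 0` (resp. `1`) outside `U` (resp. `a`) is joined to a point of `a`
(resp. `U`) by a line that also meets a transversal, at the point where `f` takes a value
`s ∉ {0, 1}`, which exists because `|K| ≥ 3`; this costs at most `2c + 2` steps.
Adjoining `a₂, a₃, …, a_m` to `a₁` one at a time, the whole space (of dimension `2m - 1`) is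
covered with `c = 2 ^ m - 2`, and a line `g` meets the lines through two of its points, giving
`2 (2 ^ m - 2) = r` steps.
-/

section
variable {K V P : Type*} [DivisionRing K] [AddCommGroup V] [Module K V] [AddTorsor V P]

section Lines

theorem aLine_affineSpan_pair {p q : P} (h : p ≠ q) : ALine K line[K, p, q] := by
  refine ⟨⟨p, left_mem_affineSpan_pair K p q⟩, ?_⟩
  rw [direction_affineSpan, vectorSpan_pair]
  exact finrank_span_singleton (vsub_ne_zero.2 h)

theorem ALine.eq_affineSpan_pair {x : AffineSubspace K P} (hx : ALine K x) {p q : P}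
    (hp : p ∈ x) (hq : q ∈ x) (hpq : p ≠ q) : x = line[K, p, q] := by
  have : FiniteDimensional K x.direction := Module.finite_of_finrank_eq_succ hx.2
  have hle : line[K, p, q] ≤ x := affineSpan_pair_le_of_mem_of_mem hp hq
  have hdir : (line[K, p, q]).direction = x.direction :=
    Submodule.eq_of_le_of_finrank_le (AffineSubspace.direction_le hle)
      (by rw [(aLine_affineSpan_pair hpq).2, hx.2])
  exact (AffineSubspace.eq_of_direction_eq_of_nonempty_of_le hdir
    ⟨p, left_mem_affineSpan_pair K p q⟩ hle).symm

theorem ALine.eq_of_mem_of_mem {x y : AffineSubspace K P} (hx : ALine K x) (hy : ALine K y)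
    {p q : P} (hpx : p ∈ x) (hqx : q ∈ x) (hpy : p ∈ y) (hqy : q ∈ y) (hpq : p ≠ q) :
    x = y := by
  rw [hx.eq_affineSpan_pair hpx hqx hpq, hy.eq_affineSpan_pair hpy hqy hpq]

theorem ALine.exists_ne {x : AffineSubspace K P} (hx : ALine K x) :
    ∃ p ∈ x, ∃ q ∈ x, p ≠ q := by
  obtain ⟨p, hp⟩ := hx.1
  have hbot : x.direction ≠ ⊥ := fun h => by
    have h1 := hx.2
    rw [h, finrank_bot] at h1
    exact zero_ne_one h1
  obtain ⟨v, hv, hv0⟩ := Submodule.exists_mem_ne_zero_of_ne_bot hbot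
  exact ⟨p, hp, v +ᵥ p, AffineSubspace.vadd_mem_of_mem_direction hv hp,
    fun h => hv0 (by simpa using congrArg (· -ᵥ p) h.symm)⟩

theorem AMeetsTwo.of_mem {x y z : AffineSubspace K P} {p q : P} (hxy : x ≠ y) (hxz : x ≠ z)
    (hpx : p ∈ x) (hpy : p ∈ y) (hqx : q ∈ x) (hqz : q ∈ z) (hpz : p ∉ z) :
    AMeetsTwo x y z := by
  refine ⟨⟨hxy, p, hpx, hpy⟩, ⟨hxz, q, hqx, hqz⟩, fun h => hpz ?_⟩
  have hp : p ∈ x ⊓ y := ⟨hpx, hpy⟩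
  rw [h] at hp
  exact hp.2

end Lines

section Chains

theorem MPred.mono {l l' : List (AffineSubspace K P)} (h : l ⊆ l') {x : AffineSubspace K P}
    (hx : MPred l x) : MPred l' x := by
  rcases hx with hx | ⟨y, hy, z, hz, hxyz⟩
  · exact Or.inl (h hx)
  · exact Or.inr ⟨y, h hy, z, h hz, hxyz⟩

/-- The lines `b₁, …, b_q` of the definition of `MqPred`, as a list. -/
def MChain (as : List (AffineSubspace K P)) : List (AffineSubspace K P) → Prop
  | [] => True
  | x :: c => (ALine K x ∧ MPred as x) ∧ MChain (as ++ [x]) c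

theorem MChain.mono : ∀ {c as as' : List (AffineSubspace K P)}, as ⊆ as' →
    MChain as c → MChain as' c
  | [], _, _, _, _ => trivial
  | _ :: _, _, _, h, ⟨hx, hc⟩ =>
    ⟨⟨hx.1, hx.2.mono h⟩,
      hc.mono fun _ hy => List.mem_append.2 ((List.mem_append.1 hy).imp_left (h ·))⟩

theorem MChain.append : ∀ {c₁ c₂ as : List (AffineSubspace K P)},
    MChain as c₁ → MChain (as ++ c₁) c₂ → MChain as (c₁ ++ c₂)
  | [], _, _, _, h₂ => by simpa using h₂
  | _ :: _, _, _, ⟨hx, h₁⟩, h₂ => ⟨hx, h₁.append (by simpa using h₂)⟩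

theorem MChain.replicate {as : List (AffineSubspace K P)} {d : AffineSubspace K P}
    (hd : ALine K d) (hdas : d ∈ as) : ∀ j, MChain as (List.replicate j d)
  | 0 => trivial
  | j + 1 => ⟨⟨hd, Or.inl hdas⟩, MChain.replicate hd (List.mem_append_left _ hdas) j⟩

theorem MChain.aLine : ∀ {c as : List (AffineSubspace K P)}, MChain as c →
    ∀ x ∈ c, ALine K x
  | [], _, _, _, hx => by simp at hx
  | _ :: _, _, ⟨hy, hc⟩, x, hx => by
    rcases List.mem_cons.1 hx with rfl | hx
    · exact hy.1
    · exact hc.aLine x hx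

theorem MChain.mPred_take : ∀ {l as : List (AffineSubspace K P)}, MChain as l →
    ∀ i (h : i < l.length), MPred (as ++ l.take i) l[i]
  | [], _, _, _, h => by simp at h
  | _ :: _, _, ⟨hy, _⟩, 0, _ => by simpa using hy.2
  | _ :: _, _, ⟨_, hc⟩, i + 1, h => by
    simpa using hc.mPred_take i (Nat.lt_of_succ_lt_succ h)

theorem MChain.mqPred {as c : List (AffineSubspace K P)} (hc : MChain as c)
    {d : AffineSubspace K P} (hd : ALine K d) (hdas : d ∈ as) {r : ℕ} (hr : c.length ≤ r)
    {g : AffineSubspace K P} (hg : MPred (as ++ c) g) : MqPred r as g := by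
  obtain ⟨c', hc', hsub, rfl⟩ : ∃ c', MChain as c' ∧ c ⊆ c' ∧ c'.length = r :=
    ⟨c ++ List.replicate (r - c.length) d,
      hc.append (.replicate hd (List.mem_append_left _ hdas) _),
      List.subset_append_left _ _,
      by simp only [List.length_append, List.length_replicate]; omega⟩
  refine ⟨c'.get, fun i => hc'.aLine _ (List.get_mem _ _), fun i => ?_, ?_⟩
  · simpa [List.ofFn_get] using hc'.mPred_take i i.isLt
  · rw [List.ofFn_get]
    exact hg.mono fun y hy => List.mem_append.2 ((List.mem_append.1 hy).imp_right (hsub ·))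

end Chains

section Reachable

variable {as as' : List (AffineSubspace K P)} {c c₁ c₂ : ℕ} {x y : AffineSubspace K P}

def Reachable (as : List (AffineSubspace K P)) (c : ℕ) (x : AffineSubspace K P) : Prop :=
  ALine K x ∧ ∃ ch, MChain as ch ∧ ch.length ≤ c ∧ x ∈ as ++ ch

theorem Reachable.of_mem (hx : ALine K x) (hxas : x ∈ as) : Reachable as 0 x :=
  ⟨hx, [], trivial, le_rfl, by simpa using hxas⟩

theorem Reachable.mono (hx : Reachable as c₁ x) (h : c₁ ≤ c₂) : Reachable as c₂ x :=
  let ⟨hl, ch, hch, hlen, hmem⟩ := hx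
  ⟨hl, ch, hch, hlen.trans h, hmem⟩

theorem Reachable.mono_left (h : as ⊆ as') (hx : Reachable as c x) : Reachable as' c x :=
  let ⟨hl, ch, hch, hlen, hmem⟩ := hx
  ⟨hl, ch, hch.mono h, hlen, List.mem_append.2 ((List.mem_append.1 hmem).imp_left (h ·))⟩

theorem Reachable.exists_mChain (hx : Reachable as c₁ x) (hy : Reachable as c₂ y) :
    ∃ ch, MChain as ch ∧ ch.length ≤ c₁ + c₂ ∧ x ∈ as ++ ch ∧ y ∈ as ++ ch := by
  obtain ⟨-, chx, hchx, hlenx, hx⟩ := hx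
  obtain ⟨-, chy, hchy, hleny, hy⟩ := hy
  refine ⟨chx ++ chy, hchx.append (hchy.mono (List.subset_append_left _ _)),
    by simp only [List.length_append]; omega, ?_, ?_⟩
  · simp only [List.mem_append] at hx ⊢
    tauto
  · simp only [List.mem_append] at hy ⊢
    tauto

theorem Reachable.of_aMeetsTwo (hx : Reachable as c₁ x) (hy : Reachable as c₂ y)
    {z : AffineSubspace K P} (hz : ALine K z) (hzxy : AMeetsTwo z x y) :
    Reachable as (c₁ + c₂ + 1) z := by
  obtain ⟨ch, hch, hlen, hx, hy⟩ := hx.exists_mChain hy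
  refine ⟨hz, ch ++ [z], hch.append ⟨⟨hz, Or.inr ⟨x, hx, y, hy, hzxy⟩⟩, trivial⟩,
    by simp only [List.length_append, List.length_singleton]; omega, by simp⟩

theorem Reachable.join (hx : Reachable as c₁ x) (hy : Reachable as c₂ y) {p q r : P}
    (hrx : r ∈ x) (hr : r ∈ line[K, p, q]) (hqy : q ∈ y) (hpx : p ∉ x) (hpy : p ∉ y)
    (hry : r ∉ y) : Reachable as (c₁ + c₂ + 1) line[K, p, q] :=
  hx.of_aMeetsTwo hy (aLine_affineSpan_pair fun h => hpy (h ▸ hqy)) <|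
    .of_mem (fun h => hpx (h ▸ left_mem_affineSpan_pair K p q))
      (fun h => hpy (h ▸ left_mem_affineSpan_pair K p q)) hr hrx
      (right_mem_affineSpan_pair K p q) hqy hry

def ReachCovers (as : List (AffineSubspace K P)) (c : ℕ) (U : AffineSubspace K P) : Prop :=
  ∀ p ∈ U, ∃ x, Reachable as c x ∧ p ∈ x ∧ x ≤ U

theorem ReachCovers.mono_left (h : as ⊆ as') {U : AffineSubspace K P}
    (hU : ReachCovers as c U) : ReachCovers as' c U := fun p hp =>
  let ⟨x, hx, hpx, hxU⟩ := hU p hp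
  ⟨x, hx.mono_left h, hpx, hxU⟩

theorem ReachCovers.mqPred {U : AffineSubspace K P} (hU : ReachCovers as c U)
    {d : AffineSubspace K P} (hd : ALine K d) (hdas : d ∈ as)
    {r : ℕ} (hr : 2 * c ≤ r) {g : AffineSubspace K P} (hg : ALine K g) (hgU : g ≤ U) :
    MqPred r as g := by
  obtain ⟨p, hp, q, hq, hpq⟩ := hg.exists_ne
  obtain ⟨x, hx, hpx, -⟩ := hU p (hgU hp)
  obtain ⟨y, hy, hqy, -⟩ := hU q (hgU hq)
  obtain ⟨ch, hch, hlen, hxch, hych⟩ := hx.exists_mChain hy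
  refine hch.mqPred hd hdas (by omega) ?_
  by_cases hgx : g = x
  · exact Or.inl (hgx ▸ hxch)
  by_cases hgy : g = y
  · exact Or.inl (hgy ▸ hych)
  have hpy : p ∉ y := fun hpy => hgy (hg.eq_of_mem_of_mem hy.1 hp hq hpy hqy hpq)
  exact Or.inr ⟨x, hxch, y, hych, .of_mem hgx hgy hp hpx hq hqy hpy⟩

end Reachable

section Join

open Module

theorem AffineMap.direction_le_ker_linear {V₂ P₂ : Type*} [AddCommGroup V₂] [Module K V₂]
    [AddTorsor V₂ P₂] {U : AffineSubspace K P} (f : P →ᵃ[K] P₂) {t : P₂}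
    (hf : ∀ u ∈ U, f u = t) : U.direction ≤ LinearMap.ker f.linear := by
  rw [AffineSubspace.direction, vectorSpan_def, Submodule.span_le]
  rintro _ ⟨u₁, hu₁, u₂, hu₂, rfl⟩
  simp [hf u₁ hu₁, hf u₂ hu₂]

theorem exists_eq_lineMap_of_mem_sup {U a : AffineSubspace K P} (hU : (U : Set P).Nonempty)
    (ha : (a : Set P).Nonempty) (f : P →ᵃ[K] K) (hfU : ∀ u ∈ U, f u = 0)
    (hfa : ∀ q ∈ a, f q = 1) {p : P} (hp : p ∈ U ⊔ a) (h0 : f p ≠ 0) (h1 : f p ≠ 1) :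
    ∃ u ∈ U, ∃ b ∈ a, p = AffineMap.lineMap u b (f p) := by
  obtain ⟨o, ho⟩ := hU
  obtain ⟨b₀, hb₀⟩ := ha
  have hpo := AffineSubspace.vsub_mem_direction hp ((le_sup_left : U ≤ U ⊔ a) ho)
  rw [AffineSubspace.direction_sup ho hb₀] at hpo
  obtain ⟨_, hwv, _, ht, hsum⟩ := Submodule.mem_sup.1 hpo
  obtain ⟨w, hw, v, hv, rfl⟩ := Submodule.mem_sup.1 hwv
  obtain ⟨t, rfl⟩ := Submodule.mem_span_singleton.1 ht
  have ht : t = f p := by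
    have := congrArg f.linear hsum
    rwa [map_add, map_add, map_smul, f.direction_le_ker_linear hfU hw,
      f.direction_le_ker_linear hfa hv, f.linearMap_vsub, f.linearMap_vsub, hfU o ho,
      hfa b₀ hb₀, vsub_eq_sub, vsub_eq_sub, sub_zero, sub_zero, zero_add, zero_add,
      smul_eq_mul, mul_one] at this
  rw [← ht] at h0 h1 ⊢
  obtain ⟨w', hw', rfl⟩ : ∃ w' ∈ U.direction, (1 - t) • w' = w :=
    ⟨(1 - t)⁻¹ • w, Submodule.smul_mem _ _ hw,
      by rw [smul_smul, mul_inv_cancel₀ (sub_ne_zero.2 h1.symm), one_smul]⟩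
  refine ⟨w' +ᵥ o, AffineSubspace.vadd_mem_of_mem_direction hw' ho, t⁻¹ • v +ᵥ b₀,
    AffineSubspace.vadd_mem_of_mem_direction (Submodule.smul_mem _ _ hv) hb₀, ?_⟩
  rw [AffineMap.lineMap_apply, vadd_vsub_vadd_comm, vadd_vadd, ← vsub_vadd p o, ← hsum]
  congr 1
  rw [smul_add, smul_sub, smul_smul, mul_inv_cancel₀ h0, one_smul, sub_smul, one_smul]
  abel

theorem exists_affineMap_eq_zero_eq_one {U ℓ : AffineSubspace K P}
    (hU : (U : Set P).Nonempty) (hℓ : ALine K ℓ)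
    (h : finrank K (U ⊔ ℓ).direction = finrank K U.direction + 2) :
    ∃ f : P →ᵃ[K] K, (∀ u ∈ U, f u = 0) ∧ ∀ q ∈ ℓ, f q = 1 := by
  obtain ⟨o, ho⟩ := hU
  obtain ⟨b, hb⟩ := hℓ.1
  have hbo : b -ᵥ o ∉ U.direction ⊔ ℓ.direction := fun hbo => by
    have hdir := AffineSubspace.direction_sup ho hb
    rw [sup_eq_left.2 ((Submodule.span_singleton_le_iff_mem _ _).2 hbo)] at hdir
    have : FiniteDimensional K (U ⊔ ℓ).direction := Module.finite_of_finrank_pos (by omega)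
    have : FiniteDimensional K U.direction := Submodule.finiteDimensional_of_le
      (AffineSubspace.direction_le (le_sup_left : U ≤ U ⊔ ℓ))
    have : FiniteDimensional K ℓ.direction := Submodule.finiteDimensional_of_le
      (AffineSubspace.direction_le (le_sup_right : ℓ ≤ U ⊔ ℓ))
    have := Submodule.finrank_add_le_finrank_add_finrank U.direction ℓ.direction
    rw [← hdir, h, hℓ.2] at this
    omega
  obtain ⟨g, hg0, hg1⟩ := LinearMap.exists_extend_of_notMem (K := K) 0 hbo (1 : K)
  have hgW : ∀ w ∈ U.direction ⊔ ℓ.direction, g w = 0 := fun w hw =>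
    LinearMap.congr_fun hg0 ⟨w, hw⟩
  refine ⟨g.toAffineMap.comp (AffineEquiv.vaddConst K o).symm.toAffineMap,
    fun u hu => ?_, fun q hq => ?_⟩
  · simpa using hgW _ (Submodule.mem_sup_left (AffineSubspace.vsub_mem_direction hu ho))
  · simp only [AffineMap.coe_comp, Function.comp_apply, AffineEquiv.coe_toAffineMap,
      AffineEquiv.vaddConst_symm_apply, LinearMap.coe_toAffineMap]
    rw [← vsub_add_vsub_cancel q b o, map_add, hg1,
      hgW _ (Submodule.mem_sup_right (AffineSubspace.vsub_mem_direction hq hb)), zero_add]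

theorem exists_aLine_finrank_direction_sup [FiniteDimensional K V] {U : AffineSubspace K P}
    (hU : (U : Set P).Nonempty) (h : finrank K U.direction + 2 ≤ finrank K V) :
    ∃ ℓ, ALine K ℓ ∧ finrank K (U ⊔ ℓ).direction = finrank K U.direction + 2 := by
  obtain ⟨o, ho⟩ := hU
  obtain ⟨v, -, hv⟩ := SetLike.exists_of_lt
    (Submodule.lt_top_of_finrank_lt_finrank (s := U.direction) (by omega))
  have hv' := Submodule.finrank_sup_span_singleton hv
  obtain ⟨d, -, hd⟩ := SetLike.exists_of_lt
    (Submodule.lt_top_of_finrank_lt_finrank (s := U.direction ⊔ K ∙ v) (by omega))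
  have hd0 : d ≠ 0 := fun h => hd (h ▸ Submodule.zero_mem _)
  refine ⟨AffineSubspace.mk' (v +ᵥ o) (K ∙ d),
    ⟨⟨_, AffineSubspace.self_mem_mk' _ _⟩, ?_⟩, ?_⟩
  · rw [AffineSubspace.direction_mk', finrank_span_singleton hd0]
  · rw [AffineSubspace.direction_sup ho (AffineSubspace.self_mem_mk' _ _),
      AffineSubspace.direction_mk', vadd_vsub, sup_right_comm,
      Submodule.finrank_sup_span_singleton hd, hv']

end Join

section Step

variable {as : List (AffineSubspace K P)} {c : ℕ} {U a : AffineSubspace K P}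

theorem ReachCovers.exists_transversal (hcov : ReachCovers as c U) (hU : (U : Set P).Nonempty)
    (ha : ALine K a) (has : a ∈ as) (f : P →ᵃ[K] K) (hfU : ∀ u ∈ U, f u = 0)
    (hfa : ∀ q ∈ a, f q = 1) {p : P} (hp : p ∈ U ⊔ a) (h0 : f p ≠ 0) (h1 : f p ≠ 1) :
    ∃ x, Reachable as (c + 1) x ∧ p ∈ x ∧ x ≤ U ⊔ a ∧
      ∀ q ∈ x, (f q = 0 → q ∈ U) ∧ (f q = 1 → q ∈ a) := by
  obtain ⟨u, hu, b, hb, hpub⟩ := exists_eq_lineMap_of_mem_sup hU ha.1 f hfU hfa hp h0 h1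
  obtain ⟨y, hy, huy, hyU⟩ := hcov u hu
  have hby : b ∉ y := fun h => by simpa [hfa b hb] using hfU b (hyU h)
  have hua : u ∉ a := fun h => by simpa [hfU u hu] using hfa u h
  have hx : Reachable as (c + 0 + 1) line[K, u, b] :=
    hy.of_aMeetsTwo (.of_mem ha has) (aLine_affineSpan_pair fun h => hby (h ▸ huy)) <|
      .of_mem (fun h => hby (h ▸ right_mem_affineSpan_pair K u b))
        (fun h => hua (h ▸ left_mem_affineSpan_pair K u b))
        (left_mem_affineSpan_pair K u b) huy (right_mem_affineSpan_pair K u b) hb hua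
  refine ⟨_, hx, hpub ▸ AffineMap.lineMap_mem_affineSpan_pair _ _ _,
    affineSpan_pair_le_of_mem_of_mem (le_sup_left (b := a) hu) (le_sup_right (a := U) hb),
    fun q hq => ?_⟩
  obtain ⟨s, rfl⟩ := (mem_affineSpan_pair_iff_exists_lineMap_eq).1 hq
  simp only [AffineMap.apply_lineMap, hfU u hu, hfa b hb, AffineMap.lineMap_apply_ring',
    sub_zero, mul_one, add_zero]
  exact ⟨fun hs => by simpa [hs] using hu, fun hs => by simpa [hs] using hb⟩

theorem ReachCovers.exists_of_apply_eq_zero (hcov : ReachCovers as c U)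
    (hU : (U : Set P).Nonempty) (ha : ALine K a) (has : a ∈ as) (f : P →ᵃ[K] K)
    (hfU : ∀ u ∈ U, f u = 0) (hfa : ∀ q ∈ a, f q = 1) {s : K} (hs0 : s ≠ 0)
    (hs1 : s ≠ 1) {p : P} (hp : p ∈ U ⊔ a) (hpU : p ∉ U) (h0 : f p = 0) :
    ∃ x, Reachable as (c + 2) x ∧ p ∈ x ∧ x ≤ U ⊔ a := by
  -- join `p` to a point `b` of `a`, through the transversal at the point where `f = s`
  obtain ⟨b, hb⟩ := ha.1
  have hbUa : b ∈ U ⊔ a := (le_sup_right : a ≤ U ⊔ a) hb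
  have hq : f (AffineMap.lineMap p b s) = s := by
    simp [AffineMap.apply_lineMap, h0, hfa b hb, AffineMap.lineMap_apply_ring']
  obtain ⟨x, hx, hqx, -, hxf⟩ := hcov.exists_transversal hU ha has f hfU hfa
    (AffineMap.lineMap_mem s hp hbUa) (by rwa [hq]) (by rwa [hq])
  have hpa : p ∉ a := fun h => by simpa [h0] using hfa p h
  exact ⟨_, hx.join (.of_mem ha has) hqx (AffineMap.lineMap_mem_affineSpan_pair s p b) hb
    (fun h => hpU ((hxf p h).1 h0)) hpa (fun h => hs1 (hq ▸ hfa _ h)),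
    left_mem_affineSpan_pair K p b, affineSpan_pair_le_of_mem_of_mem hp hbUa⟩

theorem ReachCovers.exists_of_apply_eq_one (hcov : ReachCovers as c U)
    (hU : (U : Set P).Nonempty) (ha : ALine K a) (has : a ∈ as) (f : P →ᵃ[K] K)
    (hfU : ∀ u ∈ U, f u = 0) (hfa : ∀ q ∈ a, f q = 1) {s : K} (hs0 : s ≠ 0)
    (hs1 : s ≠ 1) {p : P} (hp : p ∈ U ⊔ a) (hpa : p ∉ a) (h1 : f p = 1) :
    ∃ x, Reachable as (2 * c + 2) x ∧ p ∈ x ∧ x ≤ U ⊔ a := by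
  -- join `p` to a point `o` of `U`, through the transversal at the point where `f = 1 - s`
  obtain ⟨o, ho⟩ := hU
  have hoUa : o ∈ U ⊔ a := (le_sup_left : U ≤ U ⊔ a) ho
  have hq : f (AffineMap.lineMap p o s) = 1 - s := by
    simp [AffineMap.apply_lineMap, h1, hfU o ho, AffineMap.lineMap_apply_ring', sub_eq_neg_add]
  obtain ⟨x, hx, hqx, -, hxf⟩ := hcov.exists_transversal ⟨o, ho⟩ ha has f hfU hfa
    (AffineMap.lineMap_mem s hp hoUa) (by rw [hq]; exact sub_ne_zero.2 hs1.symm)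
    (by rw [hq]; exact fun h => hs0 (by simpa using h))
  obtain ⟨y, hy, hoy, hyU⟩ := hcov o ho
  have hz := hx.join hy hqx (AffineMap.lineMap_mem_affineSpan_pair s p o) hoy
    (fun h => hpa ((hxf p h).2 h1)) (fun h => by simpa [h1] using hfU p (hyU h))
    (fun h => hs1 (sub_eq_zero.1 (hq.symm.trans (hfU _ (hyU h)))).symm)
  exact ⟨_, hz.mono (by omega), left_mem_affineSpan_pair K p o,
    affineSpan_pair_le_of_mem_of_mem hp hoUa⟩

theorem ReachCovers.sup (hcov : ReachCovers as c U) (hU : (U : Set P).Nonempty)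
    (ha : ALine K a) (has : a ∈ as) (f : P →ᵃ[K] K) (hfU : ∀ u ∈ U, f u = 0)
    (hfa : ∀ q ∈ a, f q = 1) {s : K} (hs0 : s ≠ 0) (hs1 : s ≠ 1) :
    ReachCovers as (2 * c + 2) (U ⊔ a) := by
  intro p hp
  by_cases hpU : p ∈ U
  · obtain ⟨x, hx, hpx, hxU⟩ := hcov p hpU
    exact ⟨x, hx.mono (by omega), hpx, hxU.trans le_sup_left⟩
  by_cases hpa : p ∈ a
  · exact ⟨a, (Reachable.of_mem ha has).mono (by omega), hpa, le_sup_right⟩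
  by_cases h0 : f p = 0
  · obtain ⟨x, hx, hpx, hxUa⟩ :=
      hcov.exists_of_apply_eq_zero hU ha has f hfU hfa hs0 hs1 hp hpU h0
    exact ⟨x, hx.mono (by omega), hpx, hxUa⟩
  by_cases h1 : f p = 1
  · exact hcov.exists_of_apply_eq_one hU ha has f hfU hfa hs0 hs1 hp hpa h1
  obtain ⟨x, hx, hpx, hxUa, -⟩ := hcov.exists_transversal hU ha has f hfU hfa hp h0 h1
  exact ⟨x, hx.mono (by omega), hpx, hxUa⟩

end Step

section Configuration

open Module

def spanLines (a : ℕ → AffineSubspace K P) (k : ℕ) : AffineSubspace K P :=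
  affineSpan K (⋃ i ∈ Finset.Icc 1 k, (a i : Set P))

def lineList (a : ℕ → AffineSubspace K P) (k : ℕ) : List (AffineSubspace K P) :=
  (List.range k).map fun i => a (i + 1)

variable {a b : ℕ → AffineSubspace K P} {k : ℕ}

theorem spanLines_succ : spanLines a (k + 1) = spanLines a k ⊔ a (k + 1) := by
  classical
  rw [spanLines, ← Finset.insert_Icc_right_eq_Icc_add_one (by omega), Finset.set_biUnion_insert,
    Set.union_comm, AffineSubspace.span_union, AffineSubspace.affineSpan_coe, spanLines]

theorem lineList_succ : lineList a (k + 1) = lineList a k ++ [a (k + 1)] := by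
  simp [lineList, List.range_succ]

theorem spanLines_one : spanLines a 1 = a 1 := by
  simp [spanLines]

theorem spanLines_congr (h : ∀ i ∈ Finset.Icc 1 k, a i = b i) :
    spanLines a k = spanLines b k := by
  unfold spanLines
  congr 1
  exact Set.iUnion₂_congr fun i hi => by rw [h i hi]

theorem lineList_congr (h : ∀ i ∈ Finset.Icc 1 k, a i = b i) : lineList a k = lineList b k :=
  List.map_congr_left fun i hi => h _ (by simp at hi ⊢; omega)

theorem mem_lineList {i : ℕ} (hi : i ∈ Finset.Icc 1 k) : a i ∈ lineList a k :=
  List.mem_map.2 ⟨i - 1, by simp at hi ⊢; omega, by congr 1; simp at hi; omega⟩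

-- `2 ^ k - 2` solves `c 1 = 0`, `c (k + 1) = 2 * c k + 2`, the recursion of `ReachCovers.sup`.
def GeneratesSpan (a : ℕ → AffineSubspace K P) (k : ℕ) : Prop :=
  (∀ i ∈ Finset.Icc 1 k, ALine K (a i)) ∧
    finrank K (spanLines a k).direction = 2 * k - 1 ∧
    ReachCovers (lineList a k) (2 ^ k - 2) (spanLines a k)

theorem generatesSpan_const_one {a₁ : AffineSubspace K P} (ha₁ : ALine K a₁) :
    GeneratesSpan (fun _ => a₁) 1 := by
  have hspan : spanLines (fun _ => a₁) 1 = a₁ := spanLines_one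
  refine ⟨fun _ _ => ha₁, by rw [hspan, ha₁.2], ?_⟩
  rw [hspan]
  exact fun p hp => ⟨a₁, .of_mem ha₁ (by simp [lineList]), hp, le_rfl⟩

theorem GeneratesSpan.nonempty (h : GeneratesSpan a k) (hk : 1 ≤ k) :
    (spanLines a k : Set P).Nonempty :=
  (h.1 1 (by simp; omega)).1.mono <| (subset_affineSpan K _).trans' <|
    Set.subset_biUnion_of_mem (u := fun i => (a i : Set P)) (by simp; omega)

theorem GeneratesSpan.update (h : GeneratesSpan a k) (hk : 1 ≤ k) {ℓ : AffineSubspace K P}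
    (hℓ : ALine K ℓ) (hdim : finrank K (spanLines a k ⊔ ℓ).direction = 2 * k + 1)
    {s : K} (hs0 : s ≠ 0) (hs1 : s ≠ 1) :
    GeneratesSpan (Function.update a (k + 1) ℓ) (k + 1) := by
  have hU := h.nonempty hk
  obtain ⟨hlines, hdimU, hcov⟩ := h
  have hagree : ∀ i ∈ Finset.Icc 1 k, Function.update a (k + 1) ℓ i = a i := fun i hi =>
    Function.update_of_ne (by simp at hi; omega) _ _
  have hspan : spanLines (Function.update a (k + 1) ℓ) (k + 1) = spanLines a k ⊔ ℓ := by
    rw [spanLines_succ, spanLines_congr hagree, Function.update_self]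
  have hlist : lineList (Function.update a (k + 1) ℓ) (k + 1) = lineList a k ++ [ℓ] := by
    rw [lineList_succ, lineList_congr hagree, Function.update_self]
  obtain ⟨f, hfU, hfℓ⟩ := exists_affineMap_eq_zero_eq_one hU hℓ (by omega)
  have hpow : 2 ≤ 2 ^ k := Nat.le_self_pow (by omega) 2
  refine ⟨fun i hi => ?_, by rw [hspan, hdim]; omega, ?_⟩
  · rcases eq_or_ne i (k + 1) with rfl | hik
    · simpa using hℓ
    · rw [Function.update_of_ne hik]
      exact hlines i (by simp at hi ⊢; omega)
  · rw [hspan, hlist, show 2 ^ (k + 1) - 2 = 2 * (2 ^ k - 2) + 2 by rw [pow_succ]; omega]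
    exact (hcov.mono_left (List.subset_append_left _ _)).sup hU hℓ (by simp) f hfU hfℓ hs0 hs1

theorem exists_generatesSpan [FiniteDimensional K V] {a₁ a₂ : AffineSubspace K P}
    (ha₁ : ALine K a₁) (ha₂ : ALine K a₂)
    (hindep : finrank K (affineSpan K ((a₁ : Set P) ∪ (a₂ : Set P))).direction = 3)
    {s : K} (hs0 : s ≠ 0) (hs1 : s ≠ 1) (hk : 2 ≤ k) (hkV : 2 * k - 1 ≤ finrank K V) :
    ∃ a : ℕ → AffineSubspace K P, a 1 = a₁ ∧ a 2 = a₂ ∧ GeneratesSpan a k := by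
  induction k, hk using Nat.le_induction with
  | base =>
    refine ⟨Function.update (fun _ => a₁) 2 a₂, by simp, by simp,
      (generatesSpan_const_one ha₁).update le_rfl ha₂ ?_ hs0 hs1⟩
    rwa [AffineSubspace.span_union, AffineSubspace.affineSpan_coe,
      AffineSubspace.affineSpan_coe, ← spanLines_one (a := fun _ => a₁)] at hindep
  | succ k hk ih =>
    obtain ⟨a, ha1, ha2, ha⟩ := ih (by omega)
    obtain ⟨ℓ, hℓ, hdim⟩ := exists_aLine_finrank_direction_sup (ha.nonempty (by omega))
      (by rw [ha.2.1]; omega)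
    refine ⟨_, ?_, ?_, ha.update (by omega) hℓ (by rw [hdim, ha.2.1]; omega) hs0 hs1⟩
    · rwa [Function.update_of_ne (by omega)]
    · rwa [Function.update_of_ne (by omega)]

end Configuration

theorem Cardinal.exists_ne_zero_ne_one {α : Type*} [Zero α] [One α]
    (h : 3 ≤ Cardinal.mk α) : ∃ s : α, s ≠ 0 ∧ s ≠ 1 := by
  classical
  by_contra! hc
  have hsub : (Set.univ : Set α) ⊆ ({0, 1} : Finset α) := fun s _ => by
    simpa using (em (s = 0)).imp id (hc s)
  have h2 := (Cardinal.mk_le_mk_of_subset hsub).trans_eq Cardinal.mk_coe_finset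
  rw [Cardinal.mk_univ] at h2
  have h32 := h.trans (h2.trans (Nat.cast_le.2 Finset.card_le_two))
  norm_num at h32

end

theorem statement18 {K V P : Type*} [DivisionRing K] [AddCommGroup V] [Module K V]
    [AddTorsor V P] {n m r : ℕ} (hn : 3 ≤ n) (hodd : Odd n)
    (hK : (3 : Cardinal) ≤ Cardinal.mk K)
    (hdim : Module.finrank K V = n) (hm : m = (n + 1) / 2) (hr : r = 2 ^ (m + 1) - 4)
    (a₁ a₂ : AffineSubspace K P) (ha₁ : ALine K a₁) (ha₂ : ALine K a₂)
    (hindep : Module.finrank K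
      (affineSpan K ((a₁ : Set P) ∪ (a₂ : Set P))).direction = 3) :
    ∃ a : ℕ → AffineSubspace K P, a 1 = a₁ ∧ a 2 = a₂ ∧
      (∀ i ∈ Finset.Icc 1 m, ALine K (a i)) ∧
      Module.finrank K
        (affineSpan K (⋃ i ∈ Finset.Icc 1 m, (a i : Set P))).direction = 2 * m - 1 ∧
      ∀ g : AffineSubspace K P, ALine K g →
        MqPred r ((List.range m).map fun i => a (i + 1)) g := by
  have hm2 : 2 ≤ m := by omega
  have hnm : n = 2 * m - 1 := by obtain ⟨t, rfl⟩ := hodd; omega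
  have : FiniteDimensional K V := Module.finite_of_finrank_pos (by omega)
  obtain ⟨s, hs0, hs1⟩ := Cardinal.exists_ne_zero_ne_one hK
  obtain ⟨a, ha1, ha2, ha⟩ := exists_generatesSpan ha₁ ha₂ hindep hs0 hs1 hm2 (by omega)
  have htop : spanLines a m = ⊤ :=
    (AffineSubspace.direction_eq_top_iff_of_nonempty (ha.nonempty (by omega))).1
      (Submodule.eq_top_of_finrank_eq (by rw [ha.2.1, hdim]; omega))
  have hpow : 2 ≤ 2 ^ m := Nat.le_self_pow (by omega) 2
  obtain ⟨hlines, hdimU, hcov⟩ := ha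
  refine ⟨a, ha1, ha2, hlines, hdimU, fun g hg => ?_⟩
  exact hcov.mqPred (hlines 1 (by simp; omega)) (mem_lineList (by simp; omega))
    (by rw [hr, pow_succ]; omega) hg (htop ▸ le_top)
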